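/- Let 0 < α < 1 and let f ∈ L¹(ℝ) (e.g. a test function). Let {a_j} be ρ-lacunary with ρ ≤ a_{j+1}/a_j ≤ ρ², {v_j} bounded with |v_j| ≤ V. Then for all t ∈ ℝ and integers 0 < L < M, |Σ_{j=L}^{M} v_j (P^α_{a_{j+1}} f(t) − P^α_{a_j} f(t))| ≤ C · ‖f‖_{L¹} / a_L², where C depends only on α, V, ρ; in particular this tail tends to 0 as L → ∞. -/

import Mathlib

/-!
Each operator is controlled by the `L¹` norm: writing `x = τ² / s`, the kernel is
`τ⁻² x^(1+α) e^(-x/4) ≤ 32 τ⁻²`, so `|P^α_τ f(t)| ≤ c_α ‖f‖₁ / τ²`. Lacunarity gives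
`a_j ≥ ρ^(j-L) a_L`, so the `j`-th term of the sum is at most `2 V c_α ‖f‖₁ ρ^(-2(j-L)) / a_L²`,
and the geometric series in `ρ⁻²` sums to a constant depending only on `α`, `V`, `ρ`.
-/

open Real MeasureTheory Finset

/-- The one-sided fractional Poisson-type operator. -/
noncomputable def fracPoisson (α τ : ℝ) (f : ℝ → ℝ) (t : ℝ) : ℝ :=
  (1 / (4 ^ α * Real.Gamma α)) *
    ∫ s in Set.Ioi (0:ℝ), τ ^ (2 * α) * Real.exp (-τ ^ 2 / (4 * s)) / s ^ (1 + α) * f (t - s)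

lemma sq_mul_exp_neg_div_four_le {x : ℝ} (hx : 0 ≤ x) : x ^ 2 * exp (-x / 4) ≤ 32 := by
  have h := pow_div_factorial_le_exp (x / 4) (by positivity) 2
  rw [neg_div, exp_neg, ← div_eq_mul_inv, div_le_iff₀ (exp_pos _)]
  norm_num [Nat.factorial] at h
  linarith

lemma rpow_mul_exp_neg_div_four_le {x p : ℝ} (hx : 0 ≤ x) (hp₀ : 0 ≤ p) (hp₂ : p ≤ 2) :
    x ^ p * exp (-x / 4) ≤ 32 := by
  rcases le_or_gt x 1 with hx1 | hx1
  · have hxp : x ^ p ≤ 1 := rpow_le_one hx hx1 hp₀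
    have hexp : exp (-x / 4) ≤ 1 := exp_le_one_iff.mpr (by linarith)
    nlinarith [exp_pos (-x / 4), rpow_nonneg hx p]
  · have hxp : x ^ p ≤ x ^ 2 := by
      exact_mod_cast rpow_le_rpow_of_exponent_le hx1.le hp₂
    nlinarith [sq_mul_exp_neg_div_four_le hx, exp_pos (-x / 4)]

lemma fracPoisson_kernel_le {α τ s : ℝ} (hα₀ : -1 ≤ α) (hα₁ : α ≤ 1) (hτ : 0 < τ) (hs : 0 < s) :
    τ ^ (2 * α) * exp (-τ ^ 2 / (4 * s)) / s ^ (1 + α) ≤ 32 / τ ^ 2 := by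
  -- with `x = τ² / s` the kernel is `τ⁻² x^(1+α) e^(-x/4)`
  have h := rpow_mul_exp_neg_div_four_le (x := τ ^ 2 / s) (p := 1 + α) (by positivity)
    (by linarith) (by linarith)
  have hpow : (τ ^ 2 / s) ^ (1 + α) = τ ^ (2 * α) * τ ^ 2 / s ^ (1 + α) := by
    rw [div_rpow (by positivity) hs.le, ← rpow_natCast τ 2, ← rpow_mul hτ.le, ← rpow_add hτ]
    norm_num [mul_add, add_comm]
  rw [hpow, show -(τ ^ 2 / s) / 4 = -τ ^ 2 / (4 * s) by ring] at h
  rw [le_div_iff₀ (by positivity)]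
  calc τ ^ (2 * α) * exp (-τ ^ 2 / (4 * s)) / s ^ (1 + α) * τ ^ 2
      = τ ^ (2 * α) * τ ^ 2 / s ^ (1 + α) * exp (-τ ^ 2 / (4 * s)) := by ring
    _ ≤ 32 := h

lemma abs_fracPoisson_le {α τ : ℝ} (hα₀ : 0 < α) (hα₁ : α ≤ 1) (hτ : 0 < τ)
    {f : ℝ → ℝ} (hf : Integrable f) (t : ℝ) :
    |fracPoisson α τ f t| ≤ 32 / (4 ^ α * Gamma α) * (∫ s, |f s|) / τ ^ 2 := by
  have hΓ : 0 < Gamma α := Gamma_pos_of_pos hα₀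
  have hdom : Integrable (fun s ↦ 32 / τ ^ 2 * |f (t - s)|) :=
    ((hf.comp_sub_left t).abs).const_mul _
  have hint : |∫ s in Set.Ioi (0:ℝ),
        τ ^ (2 * α) * exp (-τ ^ 2 / (4 * s)) / s ^ (1 + α) * f (t - s)|
      ≤ 32 / τ ^ 2 * ∫ s, |f s| := by
    rw [← norm_eq_abs]
    calc _ ≤ ∫ s in Set.Ioi (0:ℝ), 32 / τ ^ 2 * |f (t - s)| := by
          refine norm_integral_le_of_norm_le hdom.restrict ?_
          filter_upwards [ae_restrict_mem measurableSet_Ioi] with s (hs : 0 < s)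
          rw [norm_mul, norm_of_nonneg (by positivity)]
          exact mul_le_mul_of_nonneg_right
            (fracPoisson_kernel_le (by linarith) hα₁ hτ hs) (norm_nonneg _)
      _ ≤ ∫ s, 32 / τ ^ 2 * |f (t - s)| :=
          setIntegral_le_integral hdom (Filter.Eventually.of_forall fun _ ↦ by positivity)
      _ = 32 / τ ^ 2 * ∫ s, |f s| := by
          rw [integral_const_mul, integral_sub_left_eq_self (fun s ↦ |f s|) volume t]
  rw [fracPoisson, abs_mul, abs_of_pos (by positivity)]
  calc _ ≤ 1 / (4 ^ α * Gamma α) * (32 / τ ^ 2 * ∫ s, |f s|) := by gcongr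
    _ = _ := by field_simp

lemma abs_mul_fracPoisson_sub_le {α τ σ v V : ℝ} (hα₀ : 0 < α) (hα₁ : α ≤ 1) (hτ : 0 < τ)
    (hτσ : τ ≤ σ) (hv : |v| ≤ V) {f : ℝ → ℝ} (hf : Integrable f) (t : ℝ) :
    |v * (fracPoisson α σ f t - fracPoisson α τ f t)|
      ≤ 2 * V * (32 / (4 ^ α * Gamma α)) * (∫ s, |f s|) / τ ^ 2 := by
  have hσ : |fracPoisson α σ f t| ≤ 32 / (4 ^ α * Gamma α) * (∫ s, |f s|) / τ ^ 2 :=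
    (abs_fracPoisson_le hα₀ hα₁ (hτ.trans_le hτσ) hf t).trans
      (by have := Gamma_pos_of_pos hα₀; gcongr)
  have hτ' := abs_fracPoisson_le hα₀ hα₁ hτ hf t
  set B := 32 / (4 ^ α * Gamma α) * (∫ s, |f s|) / τ ^ 2
  calc _ = |v| * |fracPoisson α σ f t - fracPoisson α τ f t| := abs_mul _ _
    _ ≤ V * (B + B) := by
        gcongr
        · exact (abs_nonneg v).trans hv
        · exact (abs_sub _ _).trans (add_le_add hσ hτ')
    _ = _ := by ring

lemma mul_pow_toNat_le_of_lacunary {a : ℤ → ℝ} {ρ : ℝ} (hρ : 0 ≤ ρ)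
    (ha : ∀ j, ρ * a j ≤ a (j + 1)) {L j : ℤ} (hLj : L ≤ j) :
    a L * ρ ^ (j - L).toNat ≤ a j := by
  induction j, hLj using Int.leInduction with
  | base => simp
  | succ j hLj ih =>
    rw [show (j + 1 - L).toNat = (j - L).toNat + 1 by omega, pow_succ, ← mul_assoc]
    calc _ ≤ a j * ρ := mul_le_mul_of_nonneg_right ih hρ
      _ ≤ a (j + 1) := by linarith [ha j]

lemma sum_Icc_pow_toNat_le {r : ℝ} (hr₀ : 0 ≤ r) (hr₁ : r < 1) (L M : ℤ) :
    ∑ j ∈ Icc L M, r ^ (j - L).toNat ≤ (1 - r)⁻¹ := by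
  have hinj : Set.InjOn (fun j ↦ (j - L).toNat) (Icc L M) := by
    intro x hx y hy h
    simp only [coe_Icc, Set.mem_Icc] at hx hy h
    omega
  rw [← sum_image hinj, ← tsum_geometric_of_lt_one hr₀ hr₁]
  exact (summable_geometric_of_lt_one hr₀ hr₁).sum_le_tsum _ fun _ _ ↦ by positivity

theorem stmt_14 (α ρ V : ℝ) (hα0 : 0 < α) (hα1 : α < 1) (hρ : 1 < ρ) (hV : 0 < V) :
    ∃ C > 0, ∀ (a v : ℤ → ℝ), (∀ j, 0 < a j) →
      (∀ j, ρ ≤ a (j + 1) / a j ∧ a (j + 1) / a j ≤ ρ ^ 2) →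
      (∀ j, |v j| ≤ V) →
      ∀ f : ℝ → ℝ, Integrable f →
      ∀ t : ℝ, ∀ L M : ℤ, 0 < L → L < M →
        |∑ j ∈ Finset.Icc L M,
            v j * (fracPoisson α (a (j + 1)) f t - fracPoisson α (a j) f t)|
          ≤ C * (∫ s, |f s|) / (a L) ^ 2 := by
  set r := (ρ ^ 2)⁻¹
  have hr₁ : r < 1 := inv_lt_one_of_one_lt₀ (one_lt_pow₀ hρ two_ne_zero)
  have hΓ : 0 < Gamma α := Gamma_pos_of_pos hα0
  set K := 2 * V * (32 / (4 ^ α * Gamma α))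
  refine ⟨K / (1 - r), div_pos (by positivity) (by linarith), ?_⟩
  intro a v ha hlac hv f hf t L M _ _
  have hstep j : ρ * a j ≤ a (j + 1) := (le_div_iff₀ (ha j)).mp (hlac j).1
  have hterm : ∀ j ∈ Icc L M,
      |v j * (fracPoisson α (a (j + 1)) f t - fracPoisson α (a j) f t)|
        ≤ K * (∫ s, |f s|) / a L ^ 2 * r ^ (j - L).toNat := by
    intro j hj
    have hgrow := mul_pow_toNat_le_of_lacunary (by linarith) hstep (mem_Icc.mp hj).1
    calc _ ≤ K * (∫ s, |f s|) / a j ^ 2 :=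
          abs_mul_fracPoisson_sub_le hα0 hα1.le (ha j) (by nlinarith [hstep j, ha j]) (hv j) hf t
      _ ≤ K * (∫ s, |f s|) / (a L * ρ ^ (j - L).toNat) ^ 2 := by
          have := ha L
          gcongr
      _ = _ := by rw [mul_pow, ← pow_mul, inv_pow, ← pow_mul']; ring
  calc _ ≤ ∑ j ∈ Icc L M, K * (∫ s, |f s|) / a L ^ 2 * r ^ (j - L).toNat :=
        (abs_sum_le_sum_abs _ _).trans (sum_le_sum hterm)
    _ ≤ K * (∫ s, |f s|) / a L ^ 2 * (1 - r)⁻¹ := by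
        rw [← mul_sum]
        gcongr
        exact sum_Icc_pow_toNat_le (by positivity) hr₁ L M
    _ = _ := by ring
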